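/- arXiv:2212.04273 — 2 statements merged into one kernel-verified Lean document; each statement's English description precedes it below -/
import Mathlib

section
/- For every d > 1 and all integers n ≥ m > 0, there exist finite families P⁻ of m points and P⁺ of n points in ℝ^d such that for every unit vector w ∈ ℝ^d, after projecting all points along w there exists a linear classifier making at most ⌈m/d⌉ misclassifications; that is, there exist a nonzero vector v ∈ ℝ^d and c ∈ ℝ such that the number of indices i with ⟪π_w(P⁻ i), v⟫ ≥ c plus the number of indices j with ⟪π_w(P⁺ j), v⟫ < c is at most ⌈m/d⌉. -/
open scoped InnerProductSpace
open scoped Classical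

/-- Projection of a point `p` along the vector `w`. -/
noncomputable def proj {d : ℕ} (w p : EuclideanSpace ℝ (Fin d)) : EuclideanSpace ℝ (Fin d) :=
  p - (⟪p, w⟫_ℝ / ‖w‖ ^ 2) • w

/-
Put the negative points at `-e (i mod d)` and all positive points at the origin. For a unit vector
`w`, pick a coordinate `k` with `w k ≠ 0` and a vector `v ⊥ w` whose coordinates other than `k` are
all `1`. Since `v ⊥ w`, projecting along `w` does not change inner products with `v`, so with
threshold `0` no positive point is misclassified, and a negative point `-e j` is misclassified only
if `j = k`. At most `⌈m / d⌉` indices `i < m` have `i mod d = k`.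
-/

lemma inner_proj_of_inner_eq_zero {d : ℕ} {w v : EuclideanSpace ℝ (Fin d)} (h : ⟪w, v⟫_ℝ = 0)
    (p : EuclideanSpace ℝ (Fin d)) : ⟪proj w p, v⟫_ℝ = ⟪p, v⟫_ℝ := by
  rw [proj, inner_sub_left, real_inner_smul_left, h, mul_zero, sub_zero]

lemma exists_inner_eq_zero_forall_ne_eq_one {d : ℕ} {w : EuclideanSpace ℝ (Fin d)} (hw : w ≠ 0) :
    ∃ k : Fin d, ∃ v : EuclideanSpace ℝ (Fin d), ⟪w, v⟫_ℝ = 0 ∧ ∀ j ≠ k, v j = 1 := by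
  obtain ⟨k, hk⟩ : ∃ k, w k ≠ 0 := by
    by_contra! h
    exact hw (PiLp.ext h)
  set one : EuclideanSpace ℝ (Fin d) := WithLp.toLp 2 fun _ => 1
  refine ⟨k, one - (⟪w, one⟫_ℝ / w k) • EuclideanSpace.single k 1, ?_, fun j hj => ?_⟩
  · rw [inner_sub_right, real_inner_smul_right, EuclideanSpace.inner_single_right]
    field_simp
    simp
  · simp [one, hj]

lemma card_filter_mod_eq_le (m d k : ℕ) (hd : 0 < d) :
    (Finset.univ.filter fun i : Fin m => i.val % d = k).card ≤ (m + d - 1) / d := by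
  rw [← Finset.card_range ((m + d - 1) / d)]
  refine Finset.card_le_card_of_injOn (fun i => i.val / d) (fun i _ => ?_) fun i hi j hj hij => ?_
  · have : (i.val + d) / d ≤ (m + d - 1) / d := Nat.div_le_div_right (by omega)
    simp only [Finset.mem_coe, Finset.mem_range, Nat.add_div_right _ hd] at this ⊢
    omega
  · simp only [Finset.coe_filter, Finset.mem_univ, true_and, Set.mem_ofPred_eq] at hi hj
    simp only at hij
    exact Fin.ext <| by rw [← Nat.div_add_mod i.val d, hij, hi, ← hj, Nat.div_add_mod]

theorem misclassification_upper_bound_general (d : ℕ) (hd : 1 < d) (m n : ℕ) :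
    ∃ Pm : Fin m → EuclideanSpace ℝ (Fin d),
    ∃ Pp : Fin n → EuclideanSpace ℝ (Fin d),
      ∀ w : EuclideanSpace ℝ (Fin d), ‖w‖ = 1 →
        ∃ v : EuclideanSpace ℝ (Fin d), v ≠ 0 ∧ ∃ c : ℝ,
          (Finset.univ.filter fun i => c ≤ ⟪proj w (Pm i), v⟫_ℝ).card +
          (Finset.univ.filter fun j => ⟪proj w (Pp j), v⟫_ℝ < c).card ≤ (m + d - 1) / d := by
  have hd0 : 0 < d := by omega
  set g : Fin m → Fin d := fun i => ⟨i.val % d, Nat.mod_lt _ hd0⟩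
  refine ⟨fun i => -EuclideanSpace.single (g i) 1, fun _ => 0, fun w hw => ?_⟩
  obtain ⟨k, v, hwv, hv⟩ :=
    exists_inner_eq_zero_forall_ne_eq_one (norm_ne_zero_iff.mp (hw ▸ one_ne_zero))
  have hv0 : v ≠ 0 := by
    have : Nontrivial (Fin d) := Fin.nontrivial_iff_two_le.mpr hd
    obtain ⟨j, hj⟩ := exists_ne k
    intro h
    simpa [h] using hv j hj
  refine ⟨v, hv0, 0, ?_⟩
  simp only [inner_proj_of_inner_eq_zero hwv, inner_zero_left, lt_self_iff_false,
    Finset.filter_false, Finset.card_empty, add_zero]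
  refine (Finset.card_le_card fun i hi => ?_).trans (card_filter_mod_eq_le m d k hd0)
  simp only [Finset.mem_filter, Finset.mem_univ, true_and, inner_neg_left,
    EuclideanSpace.inner_single_left, map_one, one_mul, Left.nonneg_neg_iff] at hi ⊢
  by_contra hik
  linarith [hv (g i) fun h => hik (congrArg Fin.val h)]

theorem misclassification_upper_bound (d : ℕ) (hd : 1 < d) (m n : ℕ) (hm : 0 < m) (hmn : m ≤ n) :
    ∃ Pm : Fin m → EuclideanSpace ℝ (Fin d),
    ∃ Pp : Fin n → EuclideanSpace ℝ (Fin d),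
      ∀ w : EuclideanSpace ℝ (Fin d), ‖w‖ = 1 →
        ∃ v : EuclideanSpace ℝ (Fin d), v ≠ 0 ∧ ∃ c : ℝ,
          (Finset.univ.filter fun i => c ≤ ⟪proj w (Pm i), v⟫_ℝ).card +
          (Finset.univ.filter fun j => ⟪proj w (Pp j), v⟫_ℝ < c).card ≤ (m + d - 1) / d :=
  misclassification_upper_bound_general d hd m n
end

section
/- Let d ≥ 1, let P⁻ be a nonempty finite family of m⁻ points and P⁺ a nonempty finite family of m⁺ points in ℝ^d. Let τ⁻ be a Tukey median of P⁻ (a point of ℝ^d of maximum Tukey depth with respect to P⁻) and τ⁺ a Tukey median of P⁺, and suppose τ⁻ ≠ τ⁺. Set w = τ⁺ − τ⁻ and project every point of P⁻ and P⁺ along w. Then every linear classifier on the projected families makes at least ⌈min(m⁻, m⁺)/(d+1)⌉ misclassifications; that is, for every nonzero v ∈ ℝ^d and every c ∈ ℝ, the number of indices i with ⟪π_w(P⁻ i), v⟫ ≥ c plus the number of indices j with ⟪π_w(P⁺ j), v⟫ < c is at least ⌈min(m⁻, m⁺)/(d+1)⌉. -/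
open scoped InnerProductSpace
open scoped Classical

/-- Tukey depth of `q` with respect to the finite family `P`. -/
noncomputable def tukeyDepth {d m : ℕ} (q : EuclideanSpace ℝ (Fin d))
    (P : Fin m → EuclideanSpace ℝ (Fin d)) : ℕ :=
  sInf {k : ℕ | ∃ v : EuclideanSpace ℝ (Fin d), v ≠ 0 ∧
    k = (Finset.univ.filter fun i => 0 ≤ ⟪P i - q, v⟫_ℝ).card}

open Finset

/-!
By the centerpoint theorem (Helly's theorem applied to the convex hulls of all subfamilies missing
fewer than `⌈m/(d+1)⌉` points) some point, hence every Tukey median, has depth at least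
`⌈m/(d+1)⌉`. Projecting along `w = τ⁺ - τ⁻` identifies the two medians, and
`⟪π_w p, v⟫ = ⟪p, π_w v⟫`, so the classifier `(v, c)` on the projected points is the classifier
`(π_w v, c)` on the original ones, and both medians lie on the same side of its hyperplane. If that
is the positive side, every point of `P⁻` in the closed halfspace `{x | ⟪x - τ⁻, π_w v⟫ ≥ 0}` is
misclassified; otherwise the same holds for `P⁺` and the opposite halfspace through `τ⁺`.
-/

theorem inner_proj_left {d : ℕ} (w p v : EuclideanSpace ℝ (Fin d)) :
    ⟪proj w p, v⟫_ℝ = ⟪p, proj w v⟫_ℝ := by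
  simp only [proj, inner_sub_left, inner_sub_right, real_inner_smul_left, real_inner_smul_right,
    real_inner_comm v w]
  ring

theorem proj_add_self {d : ℕ} (w p : EuclideanSpace ℝ (Fin d)) : proj w (p + w) = proj w p := by
  obtain rfl | hw := eq_or_ne w 0
  · simp [proj]
  have hw2 : ‖w‖ ^ 2 ≠ 0 := by positivity
  simp only [proj, inner_add_left, real_inner_self_eq_norm_sq, add_div, div_self hw2, add_smul,
    one_smul]
  abel

def IsTukeyMedian {d m : ℕ} (P : Fin m → EuclideanSpace ℝ (Fin d))
    (τ : EuclideanSpace ℝ (Fin d)) : Prop :=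
  ∀ q, tukeyDepth q P ≤ tukeyDepth τ P

section Centerpoint

variable {E : Type*} [NormedAddCommGroup E] [InnerProductSpace ℝ E] {ι : Type*}

theorem Finset.exists_forall_mem_of_sum_card_compl_lt [Fintype ι] [DecidableEq ι]
    (I : Finset (Finset ι)) (h : ∑ S ∈ I, #Sᶜ < Fintype.card ι) : ∃ i, ∀ S ∈ I, i ∈ S := by
  obtain ⟨i, -, hi⟩ := exists_mem_notMem_of_card_lt_card (s := I.biUnion compl) (t := univ)
    (card_biUnion_le.trans_lt h)
  exact ⟨i, fun S hS => by simpa using fun h => hi (mem_biUnion.2 ⟨S, hS, mem_compl.2 h⟩)⟩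

theorem exists_mem_inner_sub_nonneg_of_mem_convexHull {P : ι → E} {S : Set ι} {q : E}
    (hq : q ∈ convexHull ℝ (P '' S)) (v : E) : ∃ i ∈ S, 0 ≤ ⟪P i - q, v⟫_ℝ := by
  by_contra! h
  have hconv : Convex ℝ {x : E | ⟪x, v⟫_ℝ < ⟪q, v⟫_ℝ} :=
    convex_halfSpace_lt ⟨fun x y => inner_add_left x y v, fun a x => real_inner_smul_left x v a⟩ _
  have hsub : P '' S ⊆ {x : E | ⟪x, v⟫_ℝ < ⟪q, v⟫_ℝ} := by
    rintro _ ⟨i, hi, rfl⟩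
    simpa [inner_sub_left] using h i hi
  exact lt_irrefl ⟪q, v⟫_ℝ (convexHull_min hsub hconv hq)

theorem exists_centerpoint [FiniteDimensional ℝ E] [Fintype ι] (P : ι → E) :
    ∃ q : E, ∀ v : E, (Fintype.card ι + Module.finrank ℝ E) / (Module.finrank ℝ E + 1) ≤
      #{i | 0 ≤ ⟪P i - q, v⟫_ℝ} := by
  classical
  set d := Module.finrank ℝ E
  set m := Fintype.card ι
  set t := (m + d) / (d + 1)
  obtain ht | ht := Nat.eq_zero_or_pos t
  · exact ⟨0, fun v => by simp [ht]⟩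
  have hbound : (d + 1) * (t - 1) < m := by
    have : t * (d + 1) ≤ m + d := Nat.div_mul_le_self _ _
    zify [ht] at *
    linarith
  -- Any `d + 1` of these index sets omit fewer than `m` indices in total, so they share one.
  have hhelly : (⋂ S ∈ ({S | #Sᶜ < t} : Finset (Finset ι)), convexHull ℝ (P '' S)).Nonempty := by
    refine Convex.helly_theorem' (fun S _ => convex_convexHull ℝ _) fun I hIs hI => ?_
    obtain ⟨i, hi⟩ := exists_forall_mem_of_sum_card_compl_lt I <| calc
      ∑ S ∈ I, #Sᶜ ≤ ∑ _S ∈ I, (t - 1) :=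
        sum_le_sum fun S hS => Nat.le_sub_one_of_lt (mem_filter.1 (hIs hS)).2
      _ = #I * (t - 1) := by rw [sum_const, smul_eq_mul]
      _ ≤ (d + 1) * (t - 1) := Nat.mul_le_mul_right _ hI
      _ < m := hbound
    exact ⟨P i, Set.mem_iInter₂.2 fun S hS => subset_convexHull ℝ _ ⟨i, hi S hS, rfl⟩⟩
  obtain ⟨q, hq⟩ := hhelly
  refine ⟨q, fun v => ?_⟩
  by_contra! hlt
  set A : Finset ι := {i | 0 ≤ ⟪P i - q, v⟫_ℝ}
  have hA : Aᶜ ∈ ({S | #Sᶜ < t} : Finset (Finset ι)) := by simpa using hlt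
  obtain ⟨i, hiA, hi⟩ :=
    exists_mem_inner_sub_nonneg_of_mem_convexHull (Set.mem_iInter₂.1 hq _ hA) v
  exact (mem_compl.1 hiA) (by simpa [A] using hi)

end Centerpoint

theorem le_tukeyDepth {d m k : ℕ} {P : Fin m → EuclideanSpace ℝ (Fin d)}
    {q v : EuclideanSpace ℝ (Fin d)} (hv : v ≠ 0)
    (h : ∀ u : EuclideanSpace ℝ (Fin d), k ≤ #{i | 0 ≤ ⟪P i - q, u⟫_ℝ}) :
    k ≤ tukeyDepth q P :=
  le_csInf ⟨_, v, hv, rfl⟩ (by rintro _ ⟨u, -, rfl⟩; exact h u)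

theorem tukeyDepth_le {d m : ℕ} (P : Fin m → EuclideanSpace ℝ (Fin d))
    (q : EuclideanSpace ℝ (Fin d)) {v : EuclideanSpace ℝ (Fin d)} (hv : v ≠ 0) :
    tukeyDepth q P ≤ #{i | 0 ≤ ⟪P i - q, v⟫_ℝ} :=
  Nat.sInf_le ⟨v, hv, rfl⟩

theorem IsTukeyMedian.le_card_halfspace {d m : ℕ} {P : Fin m → EuclideanSpace ℝ (Fin d)}
    {τ : EuclideanSpace ℝ (Fin d)} (hτ : IsTukeyMedian P τ) (u : EuclideanSpace ℝ (Fin d)) :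
    (m + d) / (d + 1) ≤ #{i | 0 ≤ ⟪P i - τ, u⟫_ℝ} := by
  obtain rfl | hu := eq_or_ne u 0
  · simpa using Nat.lt_succ_iff.1 ((Nat.div_lt_iff_lt_mul (by omega)).2 (by nlinarith))
  obtain ⟨q, hq⟩ := exists_centerpoint P
  simp only [Fintype.card_fin, finrank_euclideanSpace_fin] at hq
  exact ((le_tukeyDepth hu hq).trans (hτ q)).trans (tukeyDepth_le P τ hu)

theorem min_le_card_misclassified {E : Type*} [NormedAddCommGroup E] [InnerProductSpace ℝ E]
    {ι κ : Type*} [Fintype ι] [Fintype κ] {P : ι → E} {Q : κ → E} {a b u : E} {k l : ℕ}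
    (hP : ∀ v, k ≤ #{i | 0 ≤ ⟪P i - a, v⟫_ℝ}) (hQ : ∀ v, l ≤ #{j | 0 ≤ ⟪Q j - b, v⟫_ℝ})
    (hab : ⟪a, u⟫_ℝ = ⟪b, u⟫_ℝ) (c : ℝ) :
    min k l ≤ #{i | c ≤ ⟪P i, u⟫_ℝ} + #{j | ⟪Q j, u⟫_ℝ < c} := by
  by_cases hc : c ≤ ⟪a, u⟫_ℝ
  · calc min k l ≤ #{i | 0 ≤ ⟪P i - a, u⟫_ℝ} := (min_le_left k l).trans (hP u)
      _ ≤ #{i | c ≤ ⟪P i, u⟫_ℝ} := card_le_card <| monotone_filter_right _ fun i _ hi => by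
          rw [inner_sub_left] at hi
          linarith
      _ ≤ _ := Nat.le_add_right _ _
  · calc min k l ≤ #{j | 0 ≤ ⟪Q j - b, -u⟫_ℝ} := (min_le_right k l).trans (hQ (-u))
      _ ≤ #{j | ⟪Q j, u⟫_ℝ < c} := card_le_card <| monotone_filter_right _ fun j _ hj => by
          rw [inner_neg_right, inner_sub_left] at hj
          linarith
      _ ≤ _ := Nat.le_add_left _ _

theorem tukey_median_projection_misclassifications_general {d m₁ m₂ : ℕ}
    (Pm : Fin m₁ → EuclideanSpace ℝ (Fin d)) (Pp : Fin m₂ → EuclideanSpace ℝ (Fin d))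
    (τm τp : EuclideanSpace ℝ (Fin d))
    (hτm : ∀ q : EuclideanSpace ℝ (Fin d), tukeyDepth q Pm ≤ tukeyDepth τm Pm)
    (hτp : ∀ q : EuclideanSpace ℝ (Fin d), tukeyDepth q Pp ≤ tukeyDepth τp Pp)
    (v : EuclideanSpace ℝ (Fin d)) (c : ℝ) :
    (min m₁ m₂ + d) / (d + 1) ≤
      (Finset.univ.filter fun i => c ≤ ⟪proj (τp - τm) (Pm i), v⟫_ℝ).card +
      (Finset.univ.filter fun j => ⟪proj (τp - τm) (Pp j), v⟫_ℝ < c).card := by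
  have hmedians : ⟪τm, proj (τp - τm) v⟫_ℝ = ⟪τp, proj (τp - τm) v⟫_ℝ := by
    rw [← inner_proj_left, ← inner_proj_left, ← proj_add_self (τp - τm) τm, add_sub_cancel]
  simp only [inner_proj_left]
  refine le_trans ?_ <| min_le_card_misclassified (IsTukeyMedian.le_card_halfspace hτm)
    (IsTukeyMedian.le_card_halfspace hτp) hmedians c
  exact le_min (Nat.div_le_div_right (by omega)) (Nat.div_le_div_right (by omega))

theorem tukey_median_projection_misclassifications {d m₁ m₂ : ℕ} (hd : 1 ≤ d)
    (hm₁ : 0 < m₁) (hm₂ : 0 < m₂)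
    (Pm : Fin m₁ → EuclideanSpace ℝ (Fin d)) (Pp : Fin m₂ → EuclideanSpace ℝ (Fin d))
    (τm τp : EuclideanSpace ℝ (Fin d))
    (hτm : ∀ q : EuclideanSpace ℝ (Fin d), tukeyDepth q Pm ≤ tukeyDepth τm Pm)
    (hτp : ∀ q : EuclideanSpace ℝ (Fin d), tukeyDepth q Pp ≤ tukeyDepth τp Pp)
    (hne : τm ≠ τp)
    (v : EuclideanSpace ℝ (Fin d)) (hv : v ≠ 0) (c : ℝ) :
    (min m₁ m₂ + d) / (d + 1) ≤
      (Finset.univ.filter fun i => c ≤ ⟪proj (τp - τm) (Pm i), v⟫_ℝ).card +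
      (Finset.univ.filter fun j => ⟪proj (τp - τm) (Pp j), v⟫_ℝ < c).card :=
  tukey_median_projection_misclassifications_general Pm Pp τm τp hτm hτp v c
end
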